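/- arXiv:1511.08981 — 2 statements merged into one kernel-verified Lean document; each statement's English description precedes it below -/
import Mathlib

section
/- Let X be a normal space and Y a topological space. If f : X → Y has F_σ preimages of all open sets, then the preimage of every functionally closed subset of Y is a functionally G_δ set in X. -/
/-- A functionally closed set: `φ ⁻¹' {0}` for some continuous `φ : Y → [0,1]`. -/
def FunctionallyClosed {Y : Type*} [TopologicalSpace Y] (F : Set Y) : Prop :=
  ∃ φ : Y → ℝ, Continuous φ ∧ (∀ y, φ y ∈ Set.Icc (0:ℝ) 1) ∧ F = φ ⁻¹' {0}

/-- A cozero set: `g ⁻¹' (ℝ \ {0})` for some continuous real-valued `g`. -/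
def Cozero {X : Type*} [TopologicalSpace X] (U : Set X) : Prop :=
  ∃ g : X → ℝ, Continuous g ∧ U = g ⁻¹' ({0}ᶜ)

/-- A set is functionally `G_δ` if it is a countable intersection of cozero sets. -/
def FunctionallyGDelta {X : Type*} [TopologicalSpace X] (A : Set X) : Prop :=
  ∃ U : ℕ → Set X, (∀ n, Cozero (U n)) ∧ A = ⋂ n, U n

def IsFSigma {X : Type*} [TopologicalSpace X] (A : Set X) : Prop :=
  ∃ F : ℕ → Set X, (∀ n, IsClosed (F n)) ∧ A = ⋃ n, F n

/-! For each `n`, the sets `{φ ∘ f < 1/(n+1)}` and `{φ ∘ f > 1/(n+1)}` are disjoint `F_σ` sets, so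
Veselý's lemma gives a functionally `G_δ` set `Cₙ` containing the first and missing the second;
since `φ ≥ 0`, `⋂ Cₙ = f⁻¹(φ⁻¹{0})`. Veselý's lemma itself comes from Urysohn's lemma, applied
to the closed pieces of the two `F_σ` sets, together with the fact that countable unions of cozero
sets are cozero. -/

open Set

section

variable {X : Type*} [TopologicalSpace X]

/-- `∑ 2⁻ⁿ min |gₙ| 1` is continuous and vanishes exactly where every `gₙ` does. -/
theorem Cozero.iUnion {U : ℕ → Set X} (hU : ∀ n, Cozero (U n)) : Cozero (⋃ n, U n) := by
  choose g hg hgU using hU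
  set h : ℕ → X → ℝ := fun n x => min |g n x| 1
  have h_nonneg (n : ℕ) (x : X) : 0 ≤ h n x := le_min (abs_nonneg _) zero_le_one
  have h_eq_zero (n : ℕ) (x : X) : h n x = 0 ↔ g n x = 0 := by
    simp +contextual [h, min_eq_iff]
  have hbound (n : ℕ) (x : X) : ‖(1 / 2 : ℝ) ^ n * h n x‖ ≤ (1 / 2) ^ n := by
    rw [norm_mul, Real.norm_of_nonneg (by positivity), Real.norm_of_nonneg (h_nonneg n x)]
    exact mul_le_of_le_one_right (by positivity) (min_le_right |g n x| 1)
  refine ⟨fun x => ∑' n, (1 / 2 : ℝ) ^ n * h n x,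
    continuous_tsum (fun n => continuous_const.mul ((hg n).abs.min continuous_const))
      summable_geometric_two hbound, ?_⟩
  ext x
  have hsum := summable_geometric_two.of_norm_bounded (hbound · x)
  simp only [hgU, mem_iUnion, mem_preimage, mem_compl_iff, mem_singleton_iff, ← hsum.hasSum_iff]
  rw [hasSum_zero_iff_of_nonneg fun n => mul_nonneg (by positivity) (h_nonneg n x)]
  simp [funext_iff, h_eq_zero]

theorem IsClosed.exists_cozero_superset_disjoint [NormalSpace X] {A G : Set X}
    (hA : IsClosed A) (hG : IsClosed G) (hAG : Disjoint A G) :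
    ∃ U, Cozero U ∧ A ⊆ U ∧ Disjoint U G := by
  obtain ⟨u, hu0, hu1, -⟩ := exists_continuous_zero_one_of_isClosed hG hA hAG.symm
  refine ⟨u ⁻¹' {0}ᶜ, ⟨u, u.continuous, rfl⟩, fun x hx => ?_, ?_⟩
  · simp [hu1 hx]
  · exact disjoint_left.2 fun x hx hxG => hx (hu0 hxG)

theorem IsFSigma.exists_cozero_superset_disjoint [NormalSpace X] {A G : Set X}
    (hA : IsFSigma A) (hG : IsClosed G) (hAG : Disjoint A G) :
    ∃ U, Cozero U ∧ A ⊆ U ∧ Disjoint U G := by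
  obtain ⟨F, hF, rfl⟩ := hA
  choose U hU hFU hUG using fun n =>
    (hF n).exists_cozero_superset_disjoint hG (hAG.mono_left (subset_iUnion F n))
  exact ⟨⋃ n, U n, Cozero.iUnion hU, iUnion_mono hFU, disjoint_iUnion_left.2 hUG⟩

theorem FunctionallyGDelta.iInter {C : ℕ → Set X} (hC : ∀ n, FunctionallyGDelta (C n)) :
    FunctionallyGDelta (⋂ n, C n) := by
  choose U hU hCU using hC
  refine ⟨fun k => U k.unpair.1 k.unpair.2, fun k => hU _ _, ?_⟩
  rw [iInter_unpair (fun n m => U n m)]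
  exact iInter_congr hCU

theorem IsFSigma.exists_functionallyGDelta_superset_disjoint [NormalSpace X] {A B : Set X}
    (hA : IsFSigma A) (hB : IsFSigma B) (hAB : Disjoint A B) :
    ∃ C, FunctionallyGDelta C ∧ A ⊆ C ∧ Disjoint C B := by
  obtain ⟨G, hG, rfl⟩ := hB
  choose U hU hAU hUG using fun m =>
    hA.exists_cozero_superset_disjoint (hG m) (hAB.mono_right (subset_iUnion G m))
  exact ⟨⋂ m, U m, ⟨U, hU, rfl⟩, subset_iInter hAU,
    disjoint_iUnion_right.2 fun m => (hUG m).mono_left (iInter_subset U m)⟩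

end

/-- For `X` normal: if `f : X → Y` has `F_σ` preimages of open sets, then the preimage of every
functionally closed subset of `Y` is functionally `G_δ` in `X` (i.e. `H₁(X,Y) ⊆ K₁^w(X,Y)`). -/
theorem H1_subset_K1w_of_normal {X Y : Type*} [TopologicalSpace X] [TopologicalSpace Y]
    [NormalSpace X] (f : X → Y) (hf : ∀ V : Set Y, IsOpen V → IsFSigma (f ⁻¹' V)) :
    ∀ F : Set Y, FunctionallyClosed F → FunctionallyGDelta (f ⁻¹' F) := by
  rintro F ⟨φ, hφ, hφ01, rfl⟩
  choose C hC hAC hCB using fun n : ℕ =>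
    (hf _ (isOpen_Iio.preimage hφ)).exists_functionallyGDelta_superset_disjoint
      (hf _ (isOpen_Ioi.preimage hφ))
      ((Iio_disjoint_Ioi_same (a := 1 / ((n : ℝ) + 1))).preimage _ |>.preimage f)
  convert FunctionallyGDelta.iInter hC using 1
  ext x
  refine ⟨fun hx => mem_iInter.2 fun n => hAC n ?_, fun hx => ?_⟩
  · simpa [show φ (f x) = 0 from hx] using Nat.cast_add_one_pos (α := ℝ) n
  · have hle (n : ℕ) : φ (f x) ≤ 1 / ((n : ℝ) + 1) :=
      not_lt.1 fun hlt => disjoint_left.1 (hCB n) (mem_iInter.1 hx n) hlt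
    exact le_antisymm (ge_of_tendsto' tendsto_one_div_add_atTop_nhds_zero_nat hle) (hφ01 _).1
end

section
/- Let Y = ℝ ∪ {∞} be the one-point compactification of the discrete real line, and define f : ℝ → Y (with ℝ carrying its usual topology) by f(0) = ∞ and f(x) = x otherwise. Then the preimage under f of every functionally closed subset of Y is a G_δ set in ℝ, but there exists an open subset V of Y whose preimage f⁻¹(V) is not an F_σ subset of ℝ. -/
/-- The real line with the discrete topology. -/
def Rdisc : Type := ℝ

instance : TopologicalSpace Rdisc := ⊥

/-!
A continuous `φ` on the one-point compactification of a discrete space tends to `φ ∞` along the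
cofinite filter, so it differs from `φ ∞` at only countably many points and takes any other value
only finitely often. Hence the preimage under `f` of a zero set of `φ` is co-countable if
`φ ∞ = 0` and finite otherwise, and both kinds of sets are `G_δ` in `ℝ`. On the other hand every
set avoiding `∞` is open, and `f` pulls back the image of the irrationals to the irrationals, which
are not `F_σ`: otherwise `ℚ` would be a dense `G_δ` disjoint from the dense `G_δ` of irrationals,
contradicting the Baire category theorem.
-/

open Filter

instance : DiscreteTopology Rdisc := ⟨rfl⟩

theorem IsFSigma.isGδ_compl {X : Type*} [TopologicalSpace X] {A : Set X} (h : IsFSigma A) :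
    IsGδ Aᶜ := by
  obtain ⟨F, hF, rfl⟩ := h
  rw [Set.compl_iUnion]
  exact .iInter fun n => (hF n).isOpen_compl.isGδ

theorem not_isGδ_range_ratCast : ¬ IsGδ (Set.range ((↑) : ℚ → ℝ)) := fun h => by
  obtain ⟨x, ⟨q, rfl⟩, hq⟩ :=
    (Rat.denseRange_cast.inter_of_Gδ h IsGδ.setOfPred_irrational dense_irrational).nonempty
  exact hq ⟨q, rfl⟩

theorem not_isFSigma_setOf_irrational : ¬ IsFSigma {x : ℝ | Irrational x} := fun h => by
  have h' := h.isGδ_compl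
  rw [show {x : ℝ | Irrational x} = (Set.range ((↑) : ℚ → ℝ))ᶜ from rfl, compl_compl] at h'
  exact not_isGδ_range_ratCast h'

namespace OnePoint

variable {X Y : Type*} [TopologicalSpace X] [DiscreteTopology X] [TopologicalSpace Y]
  {φ : OnePoint X → Y}

theorem countable_setOf_ne_infty_of_continuous [T1Space Y] [FirstCountableTopology Y]
    (hφ : Continuous φ) : {x : X | φ x ≠ φ ∞}.Countable := by
  simpa [Set.compl_def, ker_nhds] using
    ((continuous_iff_from_discrete φ).1 hφ).countable_compl_preimage_ker

theorem finite_setOf_eq_of_continuous [T1Space Y] (hφ : Continuous φ) {y : Y} (hy : φ ∞ ≠ y) :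
    {x : X | φ x = y}.Finite := by
  simpa using eventually_cofinite.1 <|
    ((continuous_iff_from_discrete φ).1 hφ).eventually (isOpen_ne.mem_nhds hy)

theorem isOpen_of_infty_notMem {s : Set (OnePoint X)} (h : ∞ ∉ s) : IsOpen s :=
  (isOpen_iff_of_notMem h).2 (isOpen_discrete _)

end OnePoint

open OnePoint

noncomputable def zeroToInfty (x : ℝ) : OnePoint Rdisc :=
  if x = 0 then ∞ else OnePoint.some (x : Rdisc)

theorem zeroToInfty_zero : zeroToInfty 0 = ∞ := if_pos rfl

theorem zeroToInfty_of_ne_zero {x : ℝ} (hx : x ≠ 0) :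
    zeroToInfty x = OnePoint.some (x : Rdisc) := if_neg hx

theorem preimage_zeroToInfty_subset {F : Set (OnePoint Rdisc)} (hF : ∞ ∉ F) :
    zeroToInfty ⁻¹' F ⊆ {x : ℝ | OnePoint.some (x : Rdisc) ∈ F} := by
  intro x hx
  by_cases h0 : x = 0
  · simp [zeroToInfty, h0, hF] at hx
  · rwa [Set.mem_preimage, zeroToInfty_of_ne_zero h0] at hx

theorem compl_preimage_zeroToInfty_subset {F : Set (OnePoint Rdisc)} (hF : ∞ ∈ F) :
    (zeroToInfty ⁻¹' F)ᶜ ⊆ {x : ℝ | OnePoint.some (x : Rdisc) ∉ F} := by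
  intro x hx
  by_cases h0 : x = 0
  · simp [zeroToInfty, h0, hF] at hx
  · rwa [Set.mem_compl_iff, Set.mem_preimage, zeroToInfty_of_ne_zero h0] at hx

theorem zeroToInfty_injective : Function.Injective zeroToInfty := by
  intro x y h
  by_cases hx : x = 0 <;> by_cases hy : y = 0
  · rw [hx, hy]
  · rw [hx, zeroToInfty_zero, zeroToInfty_of_ne_zero hy] at h
    exact (infty_ne_coe _ h).elim
  · rw [hy, zeroToInfty_zero, zeroToInfty_of_ne_zero hx] at h
    exact (coe_ne_infty _ h).elim
  · rw [zeroToInfty_of_ne_zero hx, zeroToInfty_of_ne_zero hy] at h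
    exact coe_injective h

theorem isGδ_preimage_zeroToInfty {F : Set (OnePoint Rdisc)} (hF : FunctionallyClosed F) :
    IsGδ (zeroToInfty ⁻¹' F) := by
  obtain ⟨φ, hφ, -, rfl⟩ := hF
  by_cases hinf : φ ∞ = 0
  · have hcount : (zeroToInfty ⁻¹' (φ ⁻¹' {0}))ᶜ.Countable :=
      (countable_setOf_ne_infty_of_continuous hφ).mono fun x hx => by
        show φ _ ≠ φ ∞
        rw [hinf]
        exact compl_preimage_zeroToInfty_subset hinf hx
    simpa using hcount.isGδ_compl
  · have hfin : (zeroToInfty ⁻¹' (φ ⁻¹' {0})).Finite :=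
      (finite_setOf_eq_of_continuous hφ hinf).subset fun x hx =>
        preimage_zeroToInfty_subset hinf hx
    exact hfin.isClosed.isGδ

open OnePoint in
/-- For the one-point compactification `Y` of the discrete real line and the map `f : ℝ → Y`
with `f 0 = ∞` and `f x = x` otherwise, preimages of functionally closed subsets of `Y` are
`G_δ` in `ℝ`, yet some open subset of `Y` has a preimage that is not `F_σ`:
`f ∈ K₁^w(ℝ,Y) \ H₁(ℝ,Y)`. -/
theorem onePoint_discrete_example :
    ∃ f : ℝ → OnePoint Rdisc,
      (f 0 = ∞) ∧ (∀ x : ℝ, x ≠ 0 → f x = OnePoint.some (x : Rdisc)) ∧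
      (∀ F : Set (OnePoint Rdisc), FunctionallyClosed F → IsGδ (f ⁻¹' F)) ∧
      (∃ V : Set (OnePoint Rdisc), IsOpen V ∧ ¬ IsFSigma (f ⁻¹' V)) := by
  refine ⟨zeroToInfty, zeroToInfty_zero, fun x => zeroToInfty_of_ne_zero,
    fun F => isGδ_preimage_zeroToInfty, zeroToInfty '' {x | Irrational x}, ?_, ?_⟩
  · refine isOpen_of_infty_notMem fun ⟨x, hx, hx0⟩ => hx.ne_zero (zeroToInfty_injective ?_)
    exact hx0.trans zeroToInfty_zero.symm
  · rw [zeroToInfty_injective.preimage_image]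
    exact not_isFSigma_setOf_irrational
end
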